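/- For u^n ⊥ B evolving by the Crank-Nicolson rotation u^{n+1} = R_θ u^n (rotation by angle θ about b with cos θ = (1 - Ω²Δt²/4)/(1+Ω²Δt²/4)), the half-step speeds satisfy ((‖u^{n+1}‖ + ‖u^n‖)/(2‖u^{n+1/2}‖))² = 2/(1 + cos θ) = 1 + Ω²Δt²/4, and consequently 1 - (‖u^{n+1}‖ + ‖u^n‖)/(2‖u^{n+1/2}‖) = 1 - √(1 + Ω²Δt²/4) = -Ω²Δt²/8 + O(Δt⁴) as Δt → 0. -/

import Mathlib

/-! The Crank–Nicolson step rotates `u⁰` about the unit vector `b` inside the plane `b⊥`, so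
`‖u¹‖ = ‖u⁰‖` and `⟪u⁰, u¹⟫ = cos θ ‖u⁰‖²`; hence `‖u^{1/2}‖² = (1 + cos θ)/2 · ‖u⁰‖²` and the squared
ratio is `2 / (1 + cos θ)`. The Cayley form of `cos θ` turns this into `1 + Ω²Δt²/4`, and the
expansion `√(1 + y) = 1 + y/2 + O(y²)` gives the `Δt⁴` remainder. -/

open Real Filter

noncomputable def cross (a b : EuclideanSpace ℝ (Fin 3)) : EuclideanSpace ℝ (Fin 3) :=
  WithLp.toLp 2 ![a 1 * b 2 - a 2 * b 1, a 2 * b 0 - a 0 * b 2, a 0 * b 1 - a 1 * b 0]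

open Matrix WithLp

lemma cross_eq_toLp_crossProduct (a b : EuclideanSpace ℝ (Fin 3)) :
    cross a b = toLp 2 (ofLp a ⨯₃ ofLp b) := rfl

lemma real_inner_eq_dotProduct {ι : Type*} [Fintype ι] (x y : EuclideanSpace ℝ ι) :
    inner ℝ x y = ofLp x ⬝ᵥ ofLp y := by
  rw [EuclideanSpace.inner_eq_star_dotProduct, star_trivial, dotProduct_comm]

lemma inner_self_cross (a u : EuclideanSpace ℝ (Fin 3)) : inner ℝ u (cross a u) = 0 := by
  rw [real_inner_eq_dotProduct, cross_eq_toLp_crossProduct, ofLp_toLp, dot_cross_self]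

lemma norm_cross_sq (a u : EuclideanSpace ℝ (Fin 3)) :
    ‖cross a u‖ ^ 2 = ‖a‖ ^ 2 * ‖u‖ ^ 2 - inner ℝ a u ^ 2 := by
  simp only [← real_inner_self_eq_norm_sq, real_inner_eq_dotProduct, cross_eq_toLp_crossProduct,
    cross_dot_cross, dotProduct_comm (ofLp u) (ofLp a)]
  ring

lemma norm_cross_of_inner_eq_zero {b u : EuclideanSpace ℝ (Fin 3)} (hb : ‖b‖ = 1)
    (hbu : inner ℝ u b = 0) : ‖cross b u‖ = ‖u‖ := by
  have h := norm_cross_sq b u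
  rw [hb, real_inner_comm, hbu] at h
  exact (pow_left_inj₀ (norm_nonneg _) (norm_nonneg _) two_ne_zero).1 (by simpa using h)

section Rotation

variable {E : Type*} [NormedAddCommGroup E] [InnerProductSpace ℝ E] {u v : E}

lemma norm_cos_smul_add_sin_smul (θ : ℝ) (huv : inner ℝ u v = 0) (hv : ‖v‖ = ‖u‖) :
    ‖cos θ • u + sin θ • v‖ = ‖u‖ := by
  refine (pow_left_inj₀ (norm_nonneg _) (norm_nonneg _) two_ne_zero).1 ?_
  rw [norm_add_sq_real, inner_smul_left, inner_smul_right, huv, norm_smul, norm_smul, hv,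
    Real.norm_eq_abs, Real.norm_eq_abs]
  simp only [mul_pow, sq_abs, conj_trivial, mul_zero]
  linear_combination ‖u‖ ^ 2 * sin_sq_add_cos_sq θ

lemma norm_midpoint_cos_smul_add_sin_smul_sq (θ : ℝ) (huv : inner ℝ u v = 0) (hv : ‖v‖ = ‖u‖) :
    ‖(1 / 2 : ℝ) • (u + (cos θ • u + sin θ • v))‖ ^ 2 = (1 + cos θ) / 2 * ‖u‖ ^ 2 := by
  rw [norm_smul, mul_pow, norm_add_sq_real, norm_cos_smul_add_sin_smul θ huv hv, inner_add_right,
    inner_smul_right, inner_smul_right, huv, real_inner_self_eq_norm_sq]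
  norm_num
  ring

end Rotation

lemma div_two_mul_sq_eq_two_div_one_add {r ρ c : ℝ} (hr : r ≠ 0)
    (hρ : ρ ^ 2 = (1 + c) / 2 * r ^ 2) : ((r + r) / (2 * ρ)) ^ 2 = 2 / (1 + c) := by
  rw [div_pow, mul_pow, hρ]
  field_simp
  ring

lemma two_div_one_add_div {x : ℝ} (hx : 1 + x ≠ 0) : 2 / (1 + (1 - x) / (1 + x)) = 1 + x := by
  field_simp
  ring

lemma sqrt_one_add_bounds {y : ℝ} (hy : 0 ≤ y) :
    0 ≤ 1 + y / 2 - √(1 + y) ∧ 1 + y / 2 - √(1 + y) ≤ y ^ 2 / 8 := by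
  have hsq : √(1 + y) ^ 2 = 1 + y := sq_sqrt (by linarith)
  have hge : 1 ≤ √(1 + y) := by rw [Real.one_le_sqrt]; linarith
  -- `(1 + y/2)^2 - (1 + y) = y^2/4`, and the conjugate `1 + y/2 + √(1+y)` is at least `2`
  have hconj : (1 + y / 2 - √(1 + y)) * (1 + y / 2 + √(1 + y)) = y ^ 2 / 4 := by
    linear_combination -hsq
  constructor <;> nlinarith

open Asymptotics in
lemma isBigO_one_sub_sqrt_one_add_mul_sq_add (c : ℝ) (hc : 0 ≤ c) :
    (fun s : ℝ => (1 - √(1 + c * s ^ 2 / 4)) - (-(c * s ^ 2 / 8))) =O[nhds 0] (fun s => s ^ 4) := by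
  refine IsBigO.of_bound (c ^ 2 / 128) (Eventually.of_forall fun s => ?_)
  obtain ⟨h0, h1⟩ := sqrt_one_add_bounds (y := c * s ^ 2 / 4) (by positivity)
  rw [Real.norm_eq_abs, Real.norm_eq_abs, abs_of_nonneg (by positivity : (0:ℝ) ≤ s ^ 4),
    abs_of_nonneg (by linarith)]
  linarith

open Asymptotics in
theorem stmt_17_general (B u0 u1 uh : EuclideanSpace ℝ (Fin 3)) (hB : B ≠ 0) (hu0 : u0 ≠ 0)
    (hperp : (inner ℝ u0 B : ℝ) = 0) (Δt θ : ℝ)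
    (hcos : Real.cos θ = (1 - ‖B‖ ^ 2 * Δt ^ 2 / 4) / (1 + ‖B‖ ^ 2 * Δt ^ 2 / 4))
    (hrot : u1 = Real.cos θ • u0 + Real.sin θ • cross (‖B‖⁻¹ • B) u0)
    (hhalf : uh = (1 / 2 : ℝ) • (u0 + u1)) :
    ((‖u1‖ + ‖u0‖) / (2 * ‖uh‖)) ^ 2 = 2 / (1 + Real.cos θ) ∧
    ((‖u1‖ + ‖u0‖) / (2 * ‖uh‖)) ^ 2 = 1 + ‖B‖ ^ 2 * Δt ^ 2 / 4 ∧
    (fun s : ℝ => (1 - Real.sqrt (1 + ‖B‖ ^ 2 * s ^ 2 / 4)) - (-(‖B‖ ^ 2 * s ^ 2 / 8)))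
      =O[nhds 0] (fun s : ℝ => s ^ 4) := by
  have hb : ‖‖B‖⁻¹ • B‖ = 1 := norm_smul_inv_norm hB
  have hperp_b : inner ℝ u0 (‖B‖⁻¹ • B) = 0 := by rw [inner_smul_right, hperp, mul_zero]
  have hcross_norm := norm_cross_of_inner_eq_zero hb hperp_b
  have hcross_perp := inner_self_cross (‖B‖⁻¹ • B) u0
  have hu1 : ‖u1‖ = ‖u0‖ := hrot ▸ norm_cos_smul_add_sin_smul θ hcross_perp hcross_norm
  have huh : ‖uh‖ ^ 2 = (1 + cos θ) / 2 * ‖u0‖ ^ 2 := by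
    rw [hhalf, hrot]
    exact norm_midpoint_cos_smul_add_sin_smul_sq θ hcross_perp hcross_norm
  have hratio : ((‖u1‖ + ‖u0‖) / (2 * ‖uh‖)) ^ 2 = 2 / (1 + cos θ) := by
    rw [hu1]
    exact div_two_mul_sq_eq_two_div_one_add (norm_ne_zero_iff.2 hu0) huh
  refine ⟨hratio, ?_, isBigO_one_sub_sqrt_one_add_mul_sq_add (‖B‖ ^ 2) (sq_nonneg _)⟩
  rw [hratio, hcos]
  exact two_div_one_add_div (by positivity)

open Asymptotics in
/-- Half-step speed relation for the Crank-Nicolson rotation: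
((‖u¹‖+‖u⁰‖)/(2‖u^{1/2}‖))² = 2/(1+cos θ) = 1 + Ω²Δt²/4, and
1 - √(1+Ω²Δt²/4) = -Ω²Δt²/8 + O(Δt⁴) as Δt → 0. -/
theorem stmt_17 (B u0 u1 uh : EuclideanSpace ℝ (Fin 3)) (hB : B ≠ 0) (hu0 : u0 ≠ 0)
    (hperp : (inner ℝ u0 B : ℝ) = 0) (Δt θ : ℝ) (hΔt : 0 < Δt)
    (hθ : θ ∈ Set.Ioo 0 Real.pi)
    (hcos : Real.cos θ = (1 - ‖B‖ ^ 2 * Δt ^ 2 / 4) / (1 + ‖B‖ ^ 2 * Δt ^ 2 / 4))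
    (hrot : u1 = Real.cos θ • u0 + Real.sin θ • cross (‖B‖⁻¹ • B) u0)
    (hhalf : uh = (1 / 2 : ℝ) • (u0 + u1)) :
    ((‖u1‖ + ‖u0‖) / (2 * ‖uh‖)) ^ 2 = 2 / (1 + Real.cos θ) ∧
    ((‖u1‖ + ‖u0‖) / (2 * ‖uh‖)) ^ 2 = 1 + ‖B‖ ^ 2 * Δt ^ 2 / 4 ∧
    (fun s : ℝ => (1 - Real.sqrt (1 + ‖B‖ ^ 2 * s ^ 2 / 4)) - (-(‖B‖ ^ 2 * s ^ 2 / 8)))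
      =O[nhds 0] (fun s : ℝ => s ^ 4) :=
  stmt_17_general B u0 u1 uh hB hu0 hperp Δt θ hcos hrot hhalf
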